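/- arXiv:2310.14830 — 7 statements merged into one kernel-verified Lean document; each statement's English description precedes it below -/
import Mathlib

section
/- For each integer j with 2 ≤ j ≤ n−1 there exist constants 0 < C₁ ≤ C₂ (depending only on n and j) such that C₁·⟨x, y⟩ ≤ σ_j(x,y) ≤ C₂·⟨x, y⟩ for all x, y in the closed Weyl chamber C̄. -/
open Real Finset

noncomputable section

/-- The Euclidean inner product on `ℝ × ℝ`. -/
def dot2 (x y : ℝ × ℝ) : ℝ := x.1 * y.1 + x.2 * y.2

/-- The positive root `α_j = (cos (πj/n), sin (πj/n))` of the dihedral system `I_n`. -/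
def alphaRoot (n : ℕ) (j : ℤ) : ℝ × ℝ :=
  (Real.cos (Real.pi * j / n), Real.sin (Real.pi * j / n))

/-- The rotation `r_j` of `ℝ²` about the origin by angle `2πj/n`. -/
def rotMap (n : ℕ) (j : ℤ) (v : ℝ × ℝ) : ℝ × ℝ :=
  (Real.cos (2 * Real.pi * j / n) * v.1 - Real.sin (2 * Real.pi * j / n) * v.2,
   Real.sin (2 * Real.pi * j / n) * v.1 + Real.cos (2 * Real.pi * j / n) * v.2)

/-- The reflection `s_j` of `ℝ²`, with matrix
`[[−cos(2πj/n), sin(2πj/n)], [sin(2πj/n), cos(2πj/n)]]`. -/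
def reflMap (n : ℕ) (j : ℤ) (v : ℝ × ℝ) : ℝ × ℝ :=
  (-Real.cos (2 * Real.pi * j / n) * v.1 + Real.sin (2 * Real.pi * j / n) * v.2,
   Real.sin (2 * Real.pi * j / n) * v.1 + Real.cos (2 * Real.pi * j / n) * v.2)

/-- `ρ_j(x,y) = ⟨x, y − r_j.y⟩`. -/
def rhoJ (n : ℕ) (j : ℤ) (x y : ℝ × ℝ) : ℝ := dot2 x (y - rotMap n j y)

/-- `σ_j(x,y) = ⟨x, y − s_j.y⟩`. -/
def sigmaJ (n : ℕ) (j : ℤ) (x y : ℝ × ℝ) : ℝ := dot2 x (y - reflMap n j y)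

/-- The closed Weyl chamber `C̄ = {x : ⟨α_0,x⟩ ≥ 0 and ⟨α_{n−1},x⟩ ≥ 0}`. -/
def chamber (n : ℕ) : Set (ℝ × ℝ) :=
  {x | 0 ≤ dot2 (alphaRoot n 0) x ∧ 0 ≤ dot2 (alphaRoot n ((n : ℤ) - 1)) x}

/-- The rotation `r̃` about the origin by angle `π/2 − π/n`. -/
def rtilde (n : ℕ) (v : ℝ × ℝ) : ℝ × ℝ :=
  (Real.sin (Real.pi / n) * v.1 - Real.cos (Real.pi / n) * v.2,
   Real.cos (Real.pi / n) * v.1 + Real.sin (Real.pi / n) * v.2)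

/-!
`s_j` is the reflection in the line `α_{-j}^⊥`, so `σ_j(x, y) = 2⟨x, α_{-j}⟩⟨y, α_{-j}⟩`; in
particular `σ_j` is bilinear. Two bilinear forms compare on a convex cone as soon as they compare
on pairs of its generators, and `C̄` is spanned by the edge vectors `(0, 1)` and
`(sin (π/n), cos (π/n))`. On these, `⟨u, v⟩ ∈ [cos (π/n), 1]`, while `-⟨u, α_{-j}⟩` equals
`sin (jπ/n)` or `sin ((j-1)π/n)`, which lie in `[sin (π/n), 1]` because `2 ≤ j ≤ n - 1`. This gives
`C₁ = 2 sin² (π/n)` and `C₂ = 2 / cos (π/n)`.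
-/

namespace LinearMap.BilinForm

variable {R M : Type*} [CommRing R] [PartialOrder R] [IsOrderedRing R] [AddCommGroup M]
  [Module R M]

theorem nonneg_of_mem_hull (B : LinearMap.BilinForm R M) {s : Set M}
    (hs : ∀ u ∈ s, ∀ v ∈ s, 0 ≤ B u v) {x y : M} (hx : x ∈ PointedCone.hull R s)
    (hy : y ∈ PointedCone.hull R s) : 0 ≤ B x y := by
  have left_mem : ∀ u ∈ s, 0 ≤ B u y := by
    intro u hu
    induction hy using Submodule.span_induction with
    | mem v hv => exact hs u hu v hv
    | zero => simp
    | add v w _ _ hv hw => rw [map_add]; exact add_nonneg hv hw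
    | smul c v _ hv => rw [← Nonneg.coe_smul, map_smul, smul_eq_mul]; exact mul_nonneg c.2 hv
  induction hx using Submodule.span_induction with
  | mem u hu => exact left_mem u hu
  | zero => simp
  | add u w _ _ hu hw => rw [map_add, LinearMap.add_apply]; exact add_nonneg hu hw
  | smul c u _ hu =>
    rw [← Nonneg.coe_smul, map_smul, LinearMap.smul_apply, smul_eq_mul]; exact mul_nonneg c.2 hu

theorem le_of_mem_hull {B B' : LinearMap.BilinForm R M} {s : Set M}
    (hs : ∀ u ∈ s, ∀ v ∈ s, B u v ≤ B' u v) {x y : M} (hx : x ∈ PointedCone.hull R s)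
    (hy : y ∈ PointedCone.hull R s) : B x y ≤ B' x y := by
  simpa using (B' - B).nonneg_of_mem_hull (fun u hu v hv => by simpa using hs u hu v hv) hx hy

end LinearMap.BilinForm

theorem Real.sin_le_sin_of_mem_Icc {p θ : ℝ} (hp : 0 ≤ p) (h₁ : p ≤ θ) (h₂ : θ ≤ π - p) :
    sin p ≤ sin θ := by
  rcases le_total θ (π / 2) with h | h
  · exact sin_le_sin_of_le_of_le_pi_div_two (by linarith [pi_pos]) h h₁
  · rw [← sin_pi_sub θ]
    exact sin_le_sin_of_le_of_le_pi_div_two (by linarith [pi_pos]) (by linarith) (by linarith)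

theorem Real.sin_pi_div_pos {n : ℕ} (hn : 1 < n) : 0 < sin (π / n) :=
  sin_pos_of_pos_of_lt_pi (by positivity) (div_lt_self pi_pos (by exact_mod_cast hn))

theorem Real.cos_pi_div_pos {n : ℕ} (hn : 2 < n) : 0 < cos (π / n) := by
  refine cos_pos_of_mem_Ioo ⟨by linarith [pi_pos, (by positivity : 0 < π / n)], ?_⟩
  exact div_lt_div_of_pos_left pi_pos two_pos (by exact_mod_cast hn)

theorem sub_reflMap (n : ℕ) (j : ℤ) (y : ℝ × ℝ) :
    y - reflMap n j y = (2 * dot2 y (alphaRoot n (-j))) • alphaRoot n (-j) := by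
  have hdouble : 2 * π * j / n = 2 * (π * j / n) := by ring
  have hneg : π * ((-j : ℤ) : ℝ) / n = -(π * j / n) := by push_cast; ring
  simp only [reflMap, alphaRoot, dot2, hdouble, hneg, cos_two_mul, sin_two_mul, cos_neg, sin_neg]
  ext <;> simp only [Prod.fst_sub, Prod.snd_sub, Prod.smul_fst, Prod.smul_snd, smul_eq_mul]
  · ring
  · linear_combination -2 * y.2 * sin_sq_add_cos_sq (π * j / n)

theorem sigmaJ_eq (n : ℕ) (j : ℤ) (x y : ℝ × ℝ) :
    sigmaJ n j x y = 2 * dot2 x (alphaRoot n (-j)) * dot2 y (alphaRoot n (-j)) := by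
  rw [sigmaJ, sub_reflMap, dot2, dot2, dot2]
  simp only [Prod.smul_fst, Prod.smul_snd, smul_eq_mul]
  ring

def dotForm : LinearMap.BilinForm ℝ (ℝ × ℝ) :=
  (LinearMap.mul ℝ ℝ).compl₁₂ (LinearMap.fst ℝ ℝ ℝ) (LinearMap.fst ℝ ℝ ℝ) +
    (LinearMap.mul ℝ ℝ).compl₁₂ (LinearMap.snd ℝ ℝ ℝ) (LinearMap.snd ℝ ℝ ℝ)

@[simp]
theorem dotForm_apply (x y : ℝ × ℝ) : dotForm x y = dot2 x y := rfl

def sigmaForm (n : ℕ) (j : ℤ) : LinearMap.BilinForm ℝ (ℝ × ℝ) :=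
  (2 : ℝ) • (LinearMap.mul ℝ ℝ).compl₁₂ (dotForm.flip (alphaRoot n (-j)))
    (dotForm.flip (alphaRoot n (-j)))

@[simp]
theorem sigmaForm_apply (n : ℕ) (j : ℤ) (x y : ℝ × ℝ) : sigmaForm n j x y = sigmaJ n j x y := by
  simp only [sigmaForm, LinearMap.smul_apply, LinearMap.compl₁₂_apply,
    LinearMap.BilinForm.flip_apply, LinearMap.mul_apply', dotForm_apply, smul_eq_mul, sigmaJ_eq]
  ring

def chamberEdges (n : ℕ) : Set (ℝ × ℝ) := {(0, 1), (sin (π / n), cos (π / n))}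

theorem mem_chamber_iff {n : ℕ} (hn : n ≠ 0) {x : ℝ × ℝ} :
    x ∈ chamber n ↔ 0 ≤ x.1 ∧ cos (π / n) * x.1 ≤ sin (π / n) * x.2 := by
  have hangle : π * (((n : ℤ) - 1 : ℤ) : ℝ) / n = π - π / n := by
    push_cast
    field_simp
  simp only [chamber, Set.mem_ofPred_eq, alphaRoot, dot2, hangle, cos_pi_sub, sin_pi_sub,
    Int.cast_zero, mul_zero, zero_div, cos_zero, sin_zero]
  constructor <;> rintro ⟨h₁, h₂⟩ <;> constructor <;> linarith

theorem chamber_subset_hull {n : ℕ} (hn : 2 ≤ n) :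
    chamber n ⊆ PointedCone.hull ℝ (chamberEdges n) := by
  intro x hx
  obtain ⟨hx₁, hx₂⟩ := (mem_chamber_iff (by omega)).1 hx
  have hsin := sin_pi_div_pos (n := n) (by omega)
  rw [SetLike.mem_coe, chamberEdges, Submodule.mem_span_pair]
  refine ⟨⟨(sin (π / n) * x.2 - cos (π / n) * x.1) / sin (π / n),
    div_nonneg (by linarith) hsin.le⟩, ⟨x.1 / sin (π / n), div_nonneg hx₁ hsin.le⟩, ?_⟩
  ext
  · simp [← Nonneg.coe_smul]
    field_simp
  · simp [← Nonneg.coe_smul]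
    field_simp
    ring

theorem dot2_mem_Icc_of_mem_chamberEdges {n : ℕ} {u v : ℝ × ℝ} (hu : u ∈ chamberEdges n)
    (hv : v ∈ chamberEdges n) : cos (π / n) ≤ dot2 u v ∧ dot2 u v ≤ 1 := by
  have := sin_sq_add_cos_sq (π / n)
  have := cos_le_one (π / n)
  rcases hu with rfl | rfl <;> rcases hv with rfl | rfl <;> simp only [dot2] <;>
    exact ⟨by nlinarith, by nlinarith⟩

theorem neg_dot2_alphaRoot_mem_Icc {n j : ℕ} (hj : 2 ≤ j) (hjn : j + 1 ≤ n) {u : ℝ × ℝ}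
    (hu : u ∈ chamberEdges n) :
    sin (π / n) ≤ -dot2 u (alphaRoot n (-j)) ∧ -dot2 u (alphaRoot n (-j)) ≤ 1 := by
  have hj' : (2 : ℝ) ≤ j := by exact_mod_cast hj
  have hjn' : (j : ℝ) + 1 ≤ n := by exact_mod_cast hjn
  have hn : (0 : ℝ) < n := by exact_mod_cast (show 0 < n by omega)
  have hp : 0 < π / n := div_pos pi_pos hn
  have hnp : n * (π / n) = π := mul_div_cancel₀ π hn.ne'
  have hangle : π * ((-(j : ℤ) : ℤ) : ℝ) / n = -(j * (π / n)) := by push_cast; ring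
  rcases hu with rfl | rfl
  · have h : -dot2 (0, 1) (alphaRoot n (-j)) = sin (j * (π / n)) := by
      simp only [dot2, alphaRoot, hangle, cos_neg, sin_neg]
      ring
    rw [h]
    exact ⟨sin_le_sin_of_mem_Icc hp.le (by nlinarith) (by nlinarith), sin_le_one _⟩
  · have h : -dot2 (sin (π / n), cos (π / n)) (alphaRoot n (-j)) =
        sin (j * (π / n) - π / n) := by
      simp only [dot2, alphaRoot, hangle, cos_neg, sin_neg, sin_sub]
      ring
    rw [h]
    exact ⟨sin_le_sin_of_mem_Icc hp.le (by nlinarith) (by nlinarith), sin_le_one _⟩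

theorem sigmaJ_mem_Icc_of_mem_chamberEdges {n j : ℕ} (hj : 2 ≤ j) (hjn : j + 1 ≤ n)
    {u v : ℝ × ℝ} (hu : u ∈ chamberEdges n) (hv : v ∈ chamberEdges n) :
    2 * sin (π / n) ^ 2 ≤ sigmaJ n j u v ∧ sigmaJ n j u v ≤ 2 := by
  have hsin := sin_pi_div_pos (n := n) (by omega)
  obtain ⟨hu₁, hu₂⟩ := neg_dot2_alphaRoot_mem_Icc hj hjn hu
  obtain ⟨hv₁, hv₂⟩ := neg_dot2_alphaRoot_mem_Icc hj hjn hv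
  rw [sigmaJ_eq]
  constructor <;> nlinarith

theorem sigmaJ_comparable_of_mem_chamberEdges {n j : ℕ} (hj : 2 ≤ j) (hjn : j + 1 ≤ n)
    {u v : ℝ × ℝ} (hu : u ∈ chamberEdges n) (hv : v ∈ chamberEdges n) :
    2 * sin (π / n) ^ 2 * dot2 u v ≤ sigmaJ n j u v ∧
      sigmaJ n j u v ≤ 2 / cos (π / n) * dot2 u v := by
  have hcos := cos_pi_div_pos (n := n) (by omega)
  obtain ⟨hσ₁, hσ₂⟩ := sigmaJ_mem_Icc_of_mem_chamberEdges hj hjn hu hv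
  obtain ⟨hdot₁, hdot₂⟩ := dot2_mem_Icc_of_mem_chamberEdges hu hv
  constructor
  · nlinarith
  · calc sigmaJ n j u v ≤ 2 / cos (π / n) * cos (π / n) := by rwa [div_mul_cancel₀ _ hcos.ne']
      _ ≤ 2 / cos (π / n) * dot2 u v := by gcongr

theorem sigma_comparable_inner_general (n : ℕ) (j : ℕ) (hj2 : 2 ≤ j) (hjn : j ≤ n - 1) :
    ∃ C₁ C₂ : ℝ, 0 < C₁ ∧ C₁ ≤ C₂ ∧
      ∀ x ∈ chamber n, ∀ y ∈ chamber n,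
        C₁ * dot2 x y ≤ sigmaJ n j x y ∧ sigmaJ n j x y ≤ C₂ * dot2 x y := by
  have hjn' : j + 1 ≤ n := by omega
  have hsin := sin_pi_div_pos (n := n) (by omega)
  have hcos := cos_pi_div_pos (n := n) (by omega)
  have hcone := chamber_subset_hull (n := n) (by omega)
  have hedges u (hu : u ∈ chamberEdges n) v (hv : v ∈ chamberEdges n) :=
    sigmaJ_comparable_of_mem_chamberEdges hj2 hjn' hu hv
  refine ⟨2 * sin (π / n) ^ 2, 2 / cos (π / n), by positivity, ?_,
    fun x hx y hy => ⟨?_, ?_⟩⟩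
  · rw [le_div_iff₀ hcos]
    nlinarith [sin_sq_add_cos_sq (π / n), cos_le_one (π / n)]
  · have h := LinearMap.BilinForm.le_of_mem_hull (B := (2 * sin (π / n) ^ 2) • dotForm)
      (B' := sigmaForm n j) (by simpa using fun u hu v hv => (hedges u hu v hv).1)
      (hcone hx) (hcone hy)
    simpa using h
  · have h := LinearMap.BilinForm.le_of_mem_hull (B := sigmaForm n j)
      (B' := (2 / cos (π / n)) • dotForm) (by simpa using fun u hu v hv => (hedges u hu v hv).2)
      (hcone hx) (hcone hy)
    simpa using h

/-- For each `2 ≤ j ≤ n−1` there are constants `0 < C₁ ≤ C₂` (depending only on `n` and `j`)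
such that `C₁⟨x,y⟩ ≤ σ_j(x,y) ≤ C₂⟨x,y⟩` on the closed Weyl chamber. -/
theorem sigma_comparable_inner (n : ℕ) (hn : 3 ≤ n) (j : ℕ) (hj2 : 2 ≤ j) (hjn : j ≤ n - 1) :
    ∃ C₁ C₂ : ℝ, 0 < C₁ ∧ C₁ ≤ C₂ ∧
      ∀ x ∈ chamber n, ∀ y ∈ chamber n,
        C₁ * dot2 x y ≤ sigmaJ n j x y ∧ sigmaJ n j x y ≤ C₂ * dot2 x y :=
  sigma_comparable_inner_general n j hj2 hjn
end
end

section
/- For each integer j with 2 ≤ j ≤ n−2 there exist constants 0 < C₁ ≤ C₂ (depending only on n and j) such that C₁·⟨x, y⟩ ≤ ρ_j(x,y) ≤ C₂·⟨x, y⟩ for all x, y in the closed Weyl chamber C̄. -/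
open Real Finset

noncomputable section

/-!
Writing `⟨x, r_j y⟩ = cos φ ⟨x, y⟩ - sin φ [x, y]` with `φ = 2πj/n` and `[x, y]` the cross
product gives `ρ_j = (1 - cos φ) ⟨x, y⟩ + sin φ [x, y]`. The chamber is a cone of opening `π/n`,
so the angle between `x` and `y` is at most `π/n` and `|[x, y]| ≤ tan (π/n) ⟨x, y⟩`. Hence `ρ_j`
lies between `(1 - cos φ ∓ |sin φ| tan (π/n)) ⟨x, y⟩`, and the lower constant is positive because
`cos (π/n) (1 - cos φ) - sin (π/n) |sin φ| = cos (π/n) - cos (φ ∓ π/n)` with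
`π/n < φ ∓ π/n < 2π - π/n` when `2 ≤ j ≤ n - 2`.
-/

def cross2 (x y : ℝ × ℝ) : ℝ := x.1 * y.2 - x.2 * y.1

/-- The closed cone of directions with angle in `[π/2 - a, π/2]`. -/
def wedge (a : ℝ) : Set (ℝ × ℝ) := {x | 0 ≤ x.1 ∧ cos a * x.1 ≤ sin a * x.2}

lemma rhoJ_eq (n : ℕ) (j : ℤ) (x y : ℝ × ℝ) :
    rhoJ n j x y = (1 - cos (2 * π * j / n)) * dot2 x y + sin (2 * π * j / n) * cross2 x y := by
  simp only [rhoJ, dot2, cross2, rotMap, Prod.fst_sub, Prod.snd_sub]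
  ring

lemma chamber_eq_wedge {n : ℕ} (hn : n ≠ 0) : chamber n = wedge (π / n) := by
  have hangle : π * (((n : ℤ) - 1 : ℤ) : ℝ) / n = π - π / n := by
    push_cast
    field_simp
  ext x
  simp only [chamber, wedge, dot2, alphaRoot, hangle, cos_pi_sub, sin_pi_sub, Int.cast_zero,
    mul_zero, zero_div, cos_zero, sin_zero, Set.mem_ofPred_eq]
  constructor <;> rintro ⟨h1, h2⟩ <;> exact ⟨by linarith, by linarith⟩

lemma abs_cross2_le_tan_mul_dot2 {a : ℝ} (ha0 : 0 < a) (ha : a < π / 2) {x y : ℝ × ℝ}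
    (hx : x ∈ wedge a) (hy : y ∈ wedge a) : |cross2 x y| ≤ tan a * dot2 x y := by
  obtain ⟨hx1, hx⟩ := hx
  obtain ⟨hy1, hy⟩ := hy
  have hs : 0 < sin a := sin_pos_of_pos_of_lt_pi ha0 (by linarith [pi_pos])
  have hc : 0 < cos a := cos_pos_of_mem_Ioo ⟨by linarith, ha⟩
  have hx2 : 0 ≤ x.2 := nonneg_of_mul_nonneg_right ((mul_nonneg hc.le hx1).trans hx) hs
  have hy2 : 0 ≤ y.2 := nonneg_of_mul_nonneg_right ((mul_nonneg hc.le hy1).trans hy) hs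
  have hbound : |cos a * cross2 x y| ≤ sin a * dot2 x y := by
    simp only [cross2, dot2]
    refine abs_le.2 ⟨?_, ?_⟩
    · linarith [mul_nonneg hx1 (add_nonneg (mul_nonneg hs.le hy1) (mul_nonneg hc.le hy2)),
        mul_nonneg hx2 (sub_nonneg.2 hy)]
    · linarith [mul_nonneg hy1 (add_nonneg (mul_nonneg hs.le hx1) (mul_nonneg hc.le hx2)),
        mul_nonneg hy2 (sub_nonneg.2 hx)]
  rw [abs_mul, abs_of_pos hc] at hbound
  rw [tan_eq_sin_div_cos, div_mul_eq_mul_div, le_div_iff₀ hc]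
  linarith

lemma cos_lt_cos_of_lt_of_lt_two_pi_sub {a θ : ℝ} (ha : 0 ≤ a) (h1 : a < θ)
    (h2 : θ < 2 * π - a) : cos θ < cos a := by
  rcases le_or_gt θ π with hθ | hθ
  · exact cos_lt_cos_of_nonneg_of_le_pi ha hθ h1
  · rw [← cos_two_pi_sub θ]
    exact cos_lt_cos_of_nonneg_of_le_pi ha (by linarith) (by linarith)

lemma abs_sin_mul_tan_lt_one_sub_cos {a φ : ℝ} (ha : 0 < a) (h1 : 2 * a < φ)
    (h2 : φ < 2 * π - 2 * a) : |sin φ| * tan a < 1 - cos φ := by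
  have hc : 0 < cos a := cos_pos_of_mem_Ioo ⟨by linarith, by linarith⟩
  rw [tan_eq_sin_div_cos, mul_div_assoc', div_lt_iff₀ hc]
  rcases le_or_gt 0 (sin φ) with hsin | hsin
  · have h := cos_lt_cos_of_lt_of_lt_two_pi_sub ha.le (a := a) (θ := φ - a)
      (by linarith) (by linarith)
    rw [cos_sub] at h
    rw [abs_of_nonneg hsin]
    linarith
  · have h := cos_lt_cos_of_lt_of_lt_two_pi_sub ha.le (a := a) (θ := φ + a)
      (by linarith) (by linarith)
    rw [cos_add] at h
    rw [abs_of_neg hsin]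
    linarith

lemma two_mul_pi_div_lt_and_lt_two_pi_sub {n j : ℕ} (hj : 1 < j) (hjn : j + 1 < n) :
    2 * (π / n) < 2 * π * j / n ∧ 2 * π * j / n < 2 * π - 2 * (π / n) := by
  have hj' : (1 : ℝ) < j := by exact_mod_cast hj
  have hjn' : (j : ℝ) + 1 < n := by exact_mod_cast hjn
  have hn : (0 : ℝ) < n := by linarith
  constructor <;> rw [← sub_pos]
  · rw [show 2 * π * j / n - 2 * (π / n) = 2 * π * (j - 1) / n by ring]
    exact div_pos (mul_pos two_pi_pos (by linarith)) hn
  · rw [show 2 * π - 2 * (π / n) - 2 * π * j / n = 2 * π * (n - 1 - j) / n by field_simp]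
    exact div_pos (mul_pos two_pi_pos (by linarith)) hn

theorem rho_comparable_inner_general (n : ℕ) (j : ℕ) (hj2 : 2 ≤ j) (hjn : j ≤ n - 2) :
    ∃ C₁ C₂ : ℝ, 0 < C₁ ∧ C₁ ≤ C₂ ∧
      ∀ x ∈ chamber n, ∀ y ∈ chamber n,
        C₁ * dot2 x y ≤ rhoJ n j x y ∧ rhoJ n j x y ≤ C₂ * dot2 x y := by
  have hn : (4 : ℝ) ≤ n := by exact_mod_cast (show 4 ≤ n by omega)
  set a := π / n
  set φ := 2 * π * j / n
  have ha : 0 < a := by positivity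
  have ha2 : a < π / 2 := div_lt_div_of_pos_left pi_pos two_pos (by linarith)
  have hφ := two_mul_pi_div_lt_and_lt_two_pi_sub (n := n) (j := j) (by omega) (by omega)
  have ht : 0 ≤ tan a := (tan_pos_of_pos_of_lt_pi_div_two ha ha2).le
  refine ⟨1 - cos φ - |sin φ| * tan a, 1 - cos φ + |sin φ| * tan a,
    sub_pos.2 (abs_sin_mul_tan_lt_one_sub_cos ha hφ.1 hφ.2),
    by linarith [mul_nonneg (abs_nonneg (sin φ)) ht], fun x hx y hy => ?_⟩
  rw [chamber_eq_wedge (by omega)] at hx hy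
  have hterm : |sin φ * cross2 x y| ≤ |sin φ| * tan a * dot2 x y := by
    rw [abs_mul, mul_assoc]
    exact mul_le_mul_of_nonneg_left (abs_cross2_le_tan_mul_dot2 ha ha2 hx hy) (abs_nonneg _)
  rw [rhoJ_eq, Int.cast_natCast]
  constructor <;> linarith [abs_le.1 hterm]

/-- For each `2 ≤ j ≤ n−2` there are constants `0 < C₁ ≤ C₂` (depending only on `n` and `j`)
such that `C₁⟨x,y⟩ ≤ ρ_j(x,y) ≤ C₂⟨x,y⟩` on the closed Weyl chamber. -/
theorem rho_comparable_inner (n : ℕ) (hn : 3 ≤ n) (j : ℕ) (hj2 : 2 ≤ j) (hjn : j ≤ n - 2) :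
    ∃ C₁ C₂ : ℝ, 0 < C₁ ∧ C₁ ≤ C₂ ∧
      ∀ x ∈ chamber n, ∀ y ∈ chamber n,
        C₁ * dot2 x y ≤ rhoJ n j x y ∧ rhoJ n j x y ≤ C₂ * dot2 x y :=
  rho_comparable_inner_general n j hj2 hjn
end
end

section
/- For every integer k with 0 ≤ k ≤ n−1 and all x, y ∈ ℝ², the elementary symmetric polynomial of degree k satisfies e_k(⟨x, r_0.y⟩, ⟨x, r_1.y⟩, …, ⟨x, r_{n−1}.y⟩) = e_k(⟨x, s_0.y⟩, ⟨x, s_1.y⟩, …, ⟨x, s_{n−1}.y⟩). -/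
/-!
Identify `ℝ²` with `ℂ` and put `ω = exp (2πi/n)`. Then `r_j v = ω^j v` and `s_j v = -ω^{-j} v̄`,
so `⟨x, r_j y⟩ = Re (x̄ y ω^j)` and `⟨x, s_j y⟩ = Re (-x y ω^j)`: both sequences are `Re (w ω^j)`
with `|w| = |x| |y|`. Expanding `(2 Re (w ω^j))^m = (w ω^j + w̄ ω^{-j})^m` binomially and summing
over `j`, every term but the middle one dies because `∑_j ω^{dj} = 0` for `0 < |d| < n`; so for
`m < n` the `m`-th power sum depends only on `|w|`. Newton's identities turn equal power sums of
degrees `1, …, n-1` into equal elementary symmetric functions of degrees `≤ n - 1`.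
-/

open Real Finset

noncomputable section

/-- The elementary symmetric polynomial of degree `k` of the `n` numbers `f 0, …, f (n−1)`:
`e_0 = 1` and `e_k = ∑_{j_1 < … < j_k} f j_1 ⋯ f j_k`. -/
def esymmR (n k : ℕ) (f : ℕ → ℝ) : ℝ :=
  ∑ A ∈ (Finset.range n).powersetCard k, ∏ j ∈ A, f j

open ComplexConjugate

namespace IsPrimitiveRoot

section Field

variable {K : Type*} [Field K] {ζ : K} {n : ℕ}

theorem geom_sum_zpow_eq_ite (hζ : IsPrimitiveRoot ζ n) {d : ℤ} (hd : d.natAbs < n) :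
    ∑ j ∈ range n, (ζ ^ d) ^ j = if d = 0 then (n : K) else 0 := by
  split_ifs with hd0
  · simp [hd0]
  · have hne : ζ ^ d ≠ 1 := by
      rw [Ne, hζ.zpow_eq_one_iff_dvd]
      exact fun hdvd => hd0 (Int.eq_zero_of_dvd_of_natAbs_lt_natAbs hdvd (by simpa using hd))
    have hpow : (ζ ^ d) ^ n = 1 := by
      rw [← zpow_natCast, ← zpow_mul, mul_comm, zpow_mul, zpow_natCast, hζ.pow_eq_one, one_zpow]
    rw [geom_sum_eq hne, hpow, sub_self, zero_div]

theorem sum_mul_pow_add_mul_inv_pow_pow (hζ : IsPrimitiveRoot ζ n) (u v : K) {m : ℕ}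
    (hm : m < n) :
    ∑ j ∈ range n, (u * ζ ^ j + v * (ζ ^ j)⁻¹) ^ m =
      ∑ i ∈ range (m + 1), if 2 * i = m then (m.choose i : K) * (u * v) ^ i * n else 0 := by
  have hζ0 : ζ ≠ 0 := hζ.ne_zero (by omega)
  have hterm : ∀ j, ∀ i ≤ m, (u * ζ ^ j) ^ i * (v * (ζ ^ j)⁻¹) ^ (m - i) =
      u ^ i * v ^ (m - i) * (ζ ^ (2 * (i : ℤ) - m)) ^ j := by
    intro j i hi
    rw [mul_pow, mul_pow, inv_pow, ← zpow_natCast (ζ ^ (2 * (i : ℤ) - m)), ← zpow_mul,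
      ← pow_mul, ← pow_mul, ← zpow_natCast ζ (j * i), ← zpow_natCast ζ (j * (m - i)),
      ← zpow_neg, mul_mul_mul_comm, ← zpow_add₀ hζ0]
    congr 2
    push_cast [Nat.cast_sub hi]
    ring
  simp_rw [add_pow, sum_comm (s := range n)]
  refine sum_congr rfl fun i hi => ?_
  have hi : i ≤ m := Nat.lt_succ_iff.mp (mem_range.mp hi)
  rw [sum_congr rfl fun j _ => by rw [hterm j i hi], ← sum_mul, ← mul_sum,
    hζ.geom_sum_zpow_eq_ite (by omega)]
  by_cases h : 2 * i = m
  · rw [if_pos (by omega), if_pos h, show m - i = i by omega, mul_pow]; ring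
  · rw [if_neg (by omega), if_neg h, mul_zero, zero_mul]

end Field

theorem sum_re_mul_pow_pow_eq_of_norm_eq {ζ : ℂ} {n : ℕ} (hζ : IsPrimitiveRoot ζ n) {m : ℕ}
    (hm : m < n) {w w' : ℂ} (hw : ‖w‖ = ‖w'‖) :
    ∑ j ∈ range n, (w * ζ ^ j).re ^ m = ∑ j ∈ range n, (w' * ζ ^ j).re ^ m := by
  have hsum : ∀ z : ℂ, (∑ j ∈ range n, (z * ζ ^ j).re ^ m : ℂ) =
      (∑ j ∈ range n, (z * ζ ^ j + conj z * (ζ ^ j)⁻¹) ^ m) / 2 ^ m := by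
    intro z
    have hconj : ∀ j : ℕ, conj (ζ ^ j) = (ζ ^ j)⁻¹ := fun j =>
      (Complex.inv_eq_conj (by rw [norm_pow, hζ.norm'_eq_one (by omega), one_pow])).symm
    simp only [sum_div, Complex.re_eq_add_conj, map_mul, hconj, div_pow]
  have hnorm : ∀ z : ℂ, z * conj z = ((‖z‖ ^ 2 : ℝ) : ℂ) := fun z => by
    rw [Complex.mul_conj, Complex.normSq_eq_norm_sq]
  apply Complex.ofReal_injective
  push_cast
  rw [hsum, hsum, hζ.sum_mul_pow_add_mul_inv_pow_pow _ _ hm,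
    hζ.sum_mul_pow_add_mul_inv_pow_pow _ _ hm, hnorm, hnorm, hw]

end IsPrimitiveRoot

theorem MvPolynomial.eval_esymm_eq_of_sum_pow_eq {σ K : Type*} [Fintype σ] [Field K] [CharZero K]
    {f g : σ → K} {N : ℕ} (h : ∀ m, 0 < m → m ≤ N → ∑ i, f i ^ m = ∑ i, g i ^ m)
    {k : ℕ} (hk : k ≤ N) : eval f (esymm σ K k) = eval g (esymm σ K k) := by
  induction k using Nat.strong_induction_on with
  | _ k ih =>
    rcases k.eq_zero_or_pos with rfl | hk0
    · simp
    have newton : ∀ φ : σ → K, (k : K) * eval φ (esymm σ K k) = (-1 : K) ^ (k + 1) *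
        ∑ a ∈ antidiagonal k with a.1 < k,
          (-1) ^ a.1 * eval φ (esymm σ K a.1) * ∑ i, φ i ^ a.2 := fun φ => by
      simpa [psum] using congrArg (eval φ) (mul_esymm_eq_sum σ K k)
    refine mul_left_cancel₀ (Nat.cast_ne_zero.mpr hk0.ne') ?_
    rw [newton, newton]
    refine congrArg _ (sum_congr rfl fun a ha => ?_)
    rw [mem_filter, HasAntidiagonal.mem_antidiagonal] at ha
    rw [ih a.1 ha.2 (by omega), h a.2 (by omega) (by omega)]

theorem esymmR_eq_eval_esymm (n k : ℕ) (f : ℕ → ℝ) :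
    esymmR n k f = MvPolynomial.eval (fun i : Fin n => f i) (MvPolynomial.esymm (Fin n) ℝ k) := by
  rw [← MvPolynomial.aeval_eq_eval, MvPolynomial.aeval_esymm_eq_multiset_esymm, esymmR,
    ← esymm_map_val]
  congr 1
  rw [Fin.univ_val_map, List.ofFn_eq_map, range_val, Multiset.range,
    ← List.map_coe_finRange_eq_range, Multiset.map_coe, List.map_map]
  rfl

theorem exp_two_pi_mul_I_div_pow (n j : ℕ) :
    Complex.exp (2 * π * Complex.I / n) ^ j =
      Real.cos (2 * π * j / n) + Real.sin (2 * π * j / n) * Complex.I := by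
  rw [← Complex.exp_nat_mul, Complex.ofReal_cos, Complex.ofReal_sin, ← Complex.exp_mul_I]
  push_cast
  ring_nf

theorem dot2_rotMap (n j : ℕ) (x y : ℝ × ℝ) :
    dot2 x (rotMap n j y) =
      (conj (⟨x.1, x.2⟩ : ℂ) * ⟨y.1, y.2⟩ * Complex.exp (2 * π * Complex.I / n) ^ j).re := by
  rw [exp_two_pi_mul_I_div_pow]
  simp only [dot2, rotMap, Complex.mul_re, Complex.mul_im, Complex.add_re, Complex.add_im,
    Complex.conj_re, Complex.conj_im, Complex.ofReal_re, Complex.ofReal_im, Complex.I_re,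
    Complex.I_im, Int.cast_natCast]
  ring

theorem dot2_reflMap (n j : ℕ) (x y : ℝ × ℝ) :
    dot2 x (reflMap n j y) =
      (-((⟨x.1, x.2⟩ : ℂ) * ⟨y.1, y.2⟩) * Complex.exp (2 * π * Complex.I / n) ^ j).re := by
  rw [exp_two_pi_mul_I_div_pow]
  simp only [dot2, reflMap, Complex.mul_re, Complex.mul_im, Complex.add_re, Complex.add_im,
    Complex.neg_re, Complex.neg_im, Complex.ofReal_re, Complex.ofReal_im, Complex.I_re,
    Complex.I_im, Int.cast_natCast]
  ring

theorem esymm_rot_eq_esymm_refl_general (n : ℕ) (k : ℕ) (hk : k ≤ n - 1)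
    (x y : ℝ × ℝ) :
    esymmR n k (fun j => dot2 x (rotMap n j y)) =
      esymmR n k (fun j => dot2 x (reflMap n j y)) := by
  rw [esymmR_eq_eval_esymm, esymmR_eq_eval_esymm]
  refine MvPolynomial.eval_esymm_eq_of_sum_pow_eq (fun m hm hmN => ?_) hk
  have hmn : m < n := by omega
  rw [Fin.sum_univ_eq_sum_range (fun j => dot2 x (rotMap n j y) ^ m),
    Fin.sum_univ_eq_sum_range (fun j => dot2 x (reflMap n j y) ^ m)]
  simp only [dot2_rotMap, dot2_reflMap]
  exact (Complex.isPrimitiveRoot_exp n (by omega)).sum_re_mul_pow_pow_eq_of_norm_eq hmn (by simp)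

/-- For `0 ≤ k ≤ n−1` and all `x, y ∈ ℝ²`,
`e_k(⟨x, r_0.y⟩, …, ⟨x, r_{n−1}.y⟩) = e_k(⟨x, s_0.y⟩, …, ⟨x, s_{n−1}.y⟩)`. -/
theorem esymm_rot_eq_esymm_refl (n : ℕ) (hn : 3 ≤ n) (k : ℕ) (hk : k ≤ n - 1)
    (x y : ℝ × ℝ) :
    esymmR n k (fun j => dot2 x (rotMap n j y)) =
      esymmR n k (fun j => dot2 x (reflMap n j y)) :=
  esymm_rot_eq_esymm_refl_general n k hk x y
end
end

section
/- For every c ∈ ℝ and all x, y ∈ ℝ², one has D_R = D_S − c^n·𝔖, i.e. ∏_{j∈ℤ/nℤ}(1 + c·ρ_j(x,y)) = ∏_{j∈ℤ/nℤ}(1 + c·σ_j(x,y)) − c^n·∏_{j∈ℤ/nℤ} σ_j(x,y). -/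
open Real Finset

noncomputable section

/-!
Identify `ℝ²` with `ℂ`, write `X, Y` for `x, y` and put `ζ = e^{2πi/n}`. Then
`1 + cρ_j = a - b ζ^j - b' ζ^{-j}` and `1 + cσ_j = a - e ζ^j - e' ζ^{-j}` with `a = 1 + c⟨x, y⟩ = 1 + b + b'`,
`b = c X̄Y/2`, `b' = c XȲ/2`, `e = -c XY/2`, `e' = -c X̄Ȳ/2`, so that `b b' = e e'`.
Over the `n`-th roots of unity `z`, `(t₁ - bz)(t₂ - bz) = -bz (a - bz - b'/z)` whenever `t₁ + t₂ = a`
and `t₁ t₂ = b b'`, and `∏ (t - bz) = tⁿ - bⁿ`; hence `∏ (a - bz - b'/z) = t₁ⁿ + t₂ⁿ - bⁿ - b'ⁿ`.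
So `D_R - D_S = eⁿ + e'ⁿ - bⁿ - b'ⁿ`, while `cⁿ 𝔖 = ∏ (b + b' - e ζ^j - e' ζ^{-j})`, which the same
formula with `(t₁, t₂) = (b, b')` evaluates to `bⁿ + b'ⁿ - eⁿ - e'ⁿ`.
-/

namespace IsPrimitiveRoot

section CommRing

variable {R : Type*} [CommRing R] [IsDomain R] {n : ℕ} {ζ : R}

lemma prod_range_sub_mul_pow (hζ : IsPrimitiveRoot ζ n) (hn : 0 < n) (u v : R) :
    ∏ i ∈ range n, (u - v * ζ ^ i) = u ^ n - v ^ n := by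
  simpa [Polynomial.eval_prod, mul_comm] using
    (congrArg (Polynomial.eval u) (X_pow_sub_C_eq_prod hζ hn rfl)).symm

lemma prod_range_pow (hζ : IsPrimitiveRoot ζ n) (hn : 0 < n) :
    ∏ i ∈ range n, ζ ^ i = (-1) ^ (n + 1) := by
  have h := hζ.prod_range_sub_mul_pow hn 0 1
  simp only [zero_sub, one_mul, prod_neg, card_range, zero_pow hn.ne', one_pow] at h
  calc ∏ i ∈ range n, ζ ^ i = (-1) ^ n * ((-1) ^ n * ∏ i ∈ range n, ζ ^ i) := by
        simp [← mul_assoc, ← mul_pow]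
    _ = (-1) ^ (n + 1) := by rw [h, pow_succ]

end CommRing

section Field

variable {K : Type*} [Field K] {n : ℕ} {ζ : K}

lemma prod_range_sub_mul_pow_sub_mul_inv_pow (hζ : IsPrimitiveRoot ζ n) (hn : 0 < n)
    {a b c t₁ t₂ : K} (hsum : t₁ + t₂ = a) (hprod : t₁ * t₂ = b * c) :
    ∏ i ∈ range n, (a - b * ζ ^ i - c * (ζ ^ i)⁻¹) = t₁ ^ n + t₂ ^ n - b ^ n - c ^ n := by
  by_cases hb : b = 0
  · subst hb
    have ht : t₁ ^ n + t₂ ^ n = a ^ n := by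
      rcases mul_eq_zero.1 (hprod.trans (zero_mul c)) with rfl | rfl
      · simp [← hsum, zero_pow hn.ne']
      · simp [← hsum, zero_pow hn.ne']
    simp_rw [ht, zero_mul, zero_pow hn.ne', sub_zero, ← inv_pow]
    exact hζ.inv.prod_range_sub_mul_pow hn a c
  have hfactor : ∀ i ∈ range n, (t₁ - b * ζ ^ i) * (t₂ - b * ζ ^ i)
      = (-b) * ζ ^ i * (a - b * ζ ^ i - c * (ζ ^ i)⁻¹) := by
    intro i _
    have hinv : ζ ^ i * (ζ ^ i)⁻¹ = 1 := mul_inv_cancel₀ (pow_ne_zero i (hζ.ne_zero hn.ne'))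
    linear_combination hprod - (b * ζ ^ i) * hsum - (b * c) * hinv
  have key := prod_congr rfl hfactor
  rw [prod_mul_distrib, hζ.prod_range_sub_mul_pow hn, hζ.prod_range_sub_mul_pow hn,
    prod_mul_distrib, prod_mul_distrib, prod_const, card_range, hζ.prod_range_pow hn] at key
  have hsign : (-b) ^ n * (-1) ^ (n + 1) = -b ^ n := by
    rw [neg_pow, pow_succ, mul_mul_mul_comm, ← mul_pow]
    simp
  have hpow : t₁ ^ n * t₂ ^ n = b ^ n * c ^ n := by rw [← mul_pow, hprod, mul_pow]
  rw [hsign] at key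
  apply mul_left_cancel₀ (pow_ne_zero n hb)
  linear_combination key - hpow

open Polynomial in
lemma prod_range_sub_mul_pow_sub_mul_inv_pow_sub [IsAlgClosed K] (hζ : IsPrimitiveRoot ζ n)
    (hn : 0 < n) (a : K) {b c b' c' : K} (h : b * c = b' * c') :
    ∏ i ∈ range n, (a - b * ζ ^ i - c * (ζ ^ i)⁻¹)
      - ∏ i ∈ range n, (a - b' * ζ ^ i - c' * (ζ ^ i)⁻¹) = b' ^ n + c' ^ n - b ^ n - c ^ n := by
  obtain ⟨t, ht⟩ := IsAlgClosed.exists_root (X ^ 2 - C a * X + C (b * c))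
    (ne_of_eq_of_ne (by compute_degree!) two_ne_zero)
  have hprod : t * (a - t) = b * c := by
    simp only [IsRoot, eval_add, eval_sub, eval_mul, eval_pow, eval_X, eval_C] at ht
    linear_combination -ht
  rw [hζ.prod_range_sub_mul_pow_sub_mul_inv_pow hn (add_sub_cancel t a) hprod,
    hζ.prod_range_sub_mul_pow_sub_mul_inv_pow hn (add_sub_cancel t a) (hprod.trans h)]
  ring

end Field

end IsPrimitiveRoot

open Complex ComplexConjugate

lemma cexp_two_pi_mul_I_div_pow (n j : ℕ) :
    cexp (2 * π * I / n) ^ j = cexp (↑(2 * π * j / n) * I) := by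
  rw [← Complex.exp_nat_mul]
  push_cast
  ring_nf

lemma ofReal_rhoJ (n : ℕ) (j : ℤ) (x y : ℝ × ℝ) :
    (rhoJ n j x y : ℂ) =
      (conj (equivRealProd.symm x) * equivRealProd.symm y
        + equivRealProd.symm x * conj (equivRealProd.symm y)) / 2
      - conj (equivRealProd.symm x) * equivRealProd.symm y / 2 * cexp (↑(2 * π * j / n) * I)
      - equivRealProd.symm x * conj (equivRealProd.symm y) / 2
        * (cexp (↑(2 * π * j / n) * I))⁻¹ := by
  simp only [rhoJ, rotMap, dot2, equivRealProd_symm_apply, map_add, map_mul, conj_ofReal, conj_I,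
    Prod.fst_sub, Prod.snd_sub]
  generalize 2 * π * j / n = θ
  rw [← Complex.exp_neg, ← neg_mul, exp_mul_I, exp_mul_I, Complex.cos_neg, Complex.sin_neg]
  push_cast
  ring_nf
  simp only [I_sq]
  ring

lemma ofReal_sigmaJ (n : ℕ) (j : ℤ) (x y : ℝ × ℝ) :
    (sigmaJ n j x y : ℂ) =
      (conj (equivRealProd.symm x) * equivRealProd.symm y
        + equivRealProd.symm x * conj (equivRealProd.symm y)) / 2
      + equivRealProd.symm x * equivRealProd.symm y / 2 * cexp (↑(2 * π * j / n) * I)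
      + conj (equivRealProd.symm x) * conj (equivRealProd.symm y) / 2
        * (cexp (↑(2 * π * j / n) * I))⁻¹ := by
  simp only [sigmaJ, reflMap, dot2, equivRealProd_symm_apply, map_add, map_mul, conj_ofReal, conj_I,
    Prod.fst_sub, Prod.snd_sub]
  generalize 2 * π * j / n = θ
  rw [← Complex.exp_neg, ← neg_mul, exp_mul_I, exp_mul_I, Complex.cos_neg, Complex.sin_neg]
  push_cast
  ring_nf
  simp only [I_sq]
  ring

/-- `D_R = D_S − c^n 𝔖`, i.e.
`∏_j (1 + cρ_j) = ∏_j (1 + cσ_j) − c^n ∏_j σ_j` for every `c ∈ ℝ` and `x, y ∈ ℝ²`. -/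
theorem prod_rot_eq_prod_refl_sub (n : ℕ) (hn : 3 ≤ n) (c : ℝ) (x y : ℝ × ℝ) :
    ∏ j ∈ Finset.range n, (1 + c * rhoJ n j x y) =
      (∏ j ∈ Finset.range n, (1 + c * sigmaJ n j x y))
        - c ^ n * ∏ j ∈ Finset.range n, sigmaJ n j x y := by
  have hζ : IsPrimitiveRoot (cexp (2 * π * I / n)) n := isPrimitiveRoot_exp n (by omega)
  set ζ := cexp (2 * π * I / n)
  set X := equivRealProd.symm x
  set Y := equivRealProd.symm y
  set b : ℂ := c * (conj X * Y / 2)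
  set b' : ℂ := c * (X * conj Y / 2)
  set e : ℂ := -c * (X * Y / 2)
  set e' : ℂ := -c * (conj X * conj Y / 2)
  have hρ : ∀ j ∈ range n, (1 + c * rhoJ n j x y : ℂ) = 1 + b + b' - b * ζ ^ j - b' * (ζ ^ j)⁻¹ := by
    intro j _
    rw [cexp_two_pi_mul_I_div_pow, ofReal_rhoJ, Int.cast_natCast]
    ring
  have hcσ : ∀ j ∈ range n, (c * sigmaJ n j x y : ℂ) = b + b' - e * ζ ^ j - e' * (ζ ^ j)⁻¹ := by
    intro j _
    rw [cexp_two_pi_mul_I_div_pow, ofReal_sigmaJ, Int.cast_natCast]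
    ring
  have hσ : ∀ j ∈ range n, (1 + c * sigmaJ n j x y : ℂ) = 1 + b + b' - e * ζ ^ j - e' * (ζ ^ j)⁻¹ := by
    intro j hj
    linear_combination hcσ j hj
  have hbe : b * b' = e * e' := by ring
  have hRS := hζ.prod_range_sub_mul_pow_sub_mul_inv_pow_sub (by omega) (1 + b + b') hbe
  have hS := hζ.prod_range_sub_mul_pow_sub_mul_inv_pow (by omega) rfl hbe
  rw [← prod_congr rfl hcσ, ← pow_card_mul_prod, card_range] at hS
  apply ofReal_injective
  push_cast
  rw [prod_congr rfl hρ, prod_congr rfl hσ]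
  linear_combination hRS + hS
end
end

section
/- For every c ∈ ℝ and all x, y ∈ ℝ², one has ∑_{j∈ℤ/nℤ} ∏_{k∈ℤ/nℤ, k≠j} (1 + c·ρ_k(x,y)) = ∑_{j∈ℤ/nℤ} ∏_{k∈ℤ/nℤ, k≠j} (1 + c·σ_k(x,y)); equivalently, whenever all factors are nonzero, D_R·𝔇_R = D_S·𝔇_S. -/
open Real Finset

noncomputable section

/-!
Write `θ_k = 2πk/n`. Both `1 + cρ_k` and `1 + cσ_k` have the form `a + p cos θ_k + q sin θ_k`
with the same `a = 1 + c⟨x, y⟩` and the same `p² + q² = c²|x|²|y|²`, and `∑_j ∏_{k ≠ j}` of such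
factors is the derivative at `a` of `P(t) = ∏_k (t + p cos θ_k + q sin θ_k)`. With
`ω = e^{2πi/n}` and `μ = (p - qi)/2`, the `k`-th factor is `t + μω^k + μ̄ω^{-k}`, and splitting
`μz² + tz + μ̄ = μ⁻¹(μz - α)(μz - β)` with `α + β = -t`, `αβ = |μ|²` gives
`P(t) = (-1)^n (α^n + β^n - μ^n - μ̄^n)`. Hence `P` depends on `(p, q)` only through `p² + q²`,
up to an additive constant, which the derivative does not see.
-/

open Complex Polynomial

theorem IsPrimitiveRoot.pow_sub_pow_eq_prod_range {R : Type*} [CommRing R] [IsDomain R]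
    {ζ : R} {n : ℕ} (hζ : IsPrimitiveRoot ζ n) (hn : 0 < n) (x y : R) :
    x ^ n - y ^ n = ∏ k ∈ range n, (x - ζ ^ k * y) := by
  simpa [eval_prod] using congrArg (eval x) (X_pow_sub_C_eq_prod hζ hn (rfl : y ^ n = y ^ n))

theorem IsPrimitiveRoot.prod_add_mul_pow_add_mul_inv_pow {K : Type*} [Field K] {ζ : K} {n : ℕ}
    (hζ : IsPrimitiveRoot ζ n) (hn : 0 < n) {t μ ν α β : K} (hμ : μ ≠ 0)
    (hsum : α + β = -t) (hprod : α * β = μ * ν) :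
    ∏ k ∈ range n, (t + μ * ζ ^ k + ν * (ζ ^ k)⁻¹)
      = (-1) ^ n * (α ^ n + β ^ n - μ ^ n - ν ^ n) := by
  have hfactor : ∀ k ∈ range n, μ * ζ ^ k * (t + μ * ζ ^ k + ν * (ζ ^ k)⁻¹)
      = (α - ζ ^ k * μ) * (β - ζ ^ k * μ) := by
    intro k _
    have hζk : ζ ^ k * (ζ ^ k)⁻¹ = 1 := mul_inv_cancel₀ (pow_ne_zero k (hζ.ne_zero hn.ne'))
    linear_combination (μ * ν) * hζk - hprod + (ζ ^ k * μ) * hsum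
  have hroots : (-1) ^ n * ∏ k ∈ range n, ζ ^ k = -1 := by
    simpa [zero_pow hn.ne', prod_neg] using (hζ.pow_sub_pow_eq_prod_range hn 0 1).symm
  have key : μ ^ n * (∏ k ∈ range n, ζ ^ k) * ∏ k ∈ range n, (t + μ * ζ ^ k + ν * (ζ ^ k)⁻¹)
      = (α ^ n - μ ^ n) * (β ^ n - μ ^ n) := by
    rw [hζ.pow_sub_pow_eq_prod_range hn α μ, hζ.pow_sub_pow_eq_prod_range hn β μ,
      ← prod_mul_distrib, ← prod_congr rfl hfactor, prod_mul_distrib, prod_mul_distrib,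
      prod_const, card_range]
  have hprod_n : α ^ n * β ^ n = μ ^ n * ν ^ n := by rw [← mul_pow, hprod, mul_pow]
  apply mul_left_cancel₀ (pow_ne_zero n hμ)
  linear_combination (-(-1) ^ n) * key - (-1) ^ n * hprod_n
    + (μ ^ n * ∏ k ∈ range n, (t + μ * ζ ^ k + ν * (ζ ^ k)⁻¹)) * hroots

theorem IsAlgClosed.exists_add_eq_and_mul_eq {K : Type*} [Field K] [IsAlgClosed K] (s m : K) :
    ∃ α β : K, α + β = s ∧ α * β = m := by
  obtain ⟨α, hα⟩ := IsAlgClosed.exists_root (X ^ 2 - C s * X + C m) (by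
    rw [show (X ^ 2 - C s * X + C m : K[X]).degree = 2 by compute_degree!]; norm_num)
  refine ⟨α, s - α, by ring, ?_⟩
  simp only [IsRoot, eval_add, eval_sub, eval_pow, eval_mul, eval_C, eval_X] at hα
  linear_combination -hα

theorem IsPrimitiveRoot.exists_prod_add_mul_pow_add_mul_inv_pow_eq_add_const {K : Type*}
    [Field K] [IsAlgClosed K] {ζ : K} {n : ℕ} (hζ : IsPrimitiveRoot ζ n) (hn : 0 < n)
    {μ ν μ' ν' : K} (hμ : μ ≠ 0) (hμ' : μ' ≠ 0) (h : μ * ν = μ' * ν') :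
    ∃ C : K, ∀ t : K, ∏ k ∈ range n, (t + μ * ζ ^ k + ν * (ζ ^ k)⁻¹)
      = ∏ k ∈ range n, (t + μ' * ζ ^ k + ν' * (ζ ^ k)⁻¹) + C := by
  refine ⟨(-1) ^ n * (μ' ^ n + ν' ^ n - μ ^ n - ν ^ n), fun t => ?_⟩
  obtain ⟨α, β, hsum, hprod⟩ := IsAlgClosed.exists_add_eq_and_mul_eq (-t) (μ * ν)
  rw [hζ.prod_add_mul_pow_add_mul_inv_pow hn hμ hsum hprod,
    hζ.prod_add_mul_pow_add_mul_inv_pow hn hμ' hsum (hprod.trans h)]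
  ring

def trigLin (n : ℕ) (p q : ℝ) (k : ℕ) : ℝ :=
  p * Real.cos (2 * π * k / n) + q * Real.sin (2 * π * k / n)

theorem ofReal_add_trigLin (n k : ℕ) (t p q : ℝ) :
    ((t + trigLin n p q k : ℝ) : ℂ) = t + (p - q * I) / 2 * exp (2 * π * I / n) ^ k
      + (p + q * I) / 2 * (exp (2 * π * I / n) ^ k)⁻¹ := by
  have hθ : exp (2 * π * I / n) ^ k = exp ((2 * π * k / n : ℝ) * I) := by
    rw [← Complex.exp_nat_mul]; push_cast; ring_nf
  rw [hθ, ← Complex.exp_neg, ← neg_mul, Complex.exp_mul_I, Complex.exp_mul_I, Complex.cos_neg,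
    Complex.sin_neg, ← Complex.ofReal_cos, ← Complex.ofReal_sin, trigLin]
  push_cast
  linear_combination (q * Complex.sin (2 * π * k / n)) * I_sq

theorem exists_prod_add_trigLin_eq_add_const (n : ℕ) {p q p' q' : ℝ}
    (h : p ^ 2 + q ^ 2 = p' ^ 2 + q' ^ 2) :
    ∃ C : ℝ, ∀ t : ℝ, ∏ k ∈ range n, (t + trigLin n p q k)
      = ∏ k ∈ range n, (t + trigLin n p' q' k) + C := by
  rcases n.eq_zero_or_pos with rfl | hn
  · exact ⟨0, by simp⟩
  by_cases h0 : p ^ 2 + q ^ 2 = 0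
  · obtain ⟨rfl, rfl⟩ : p = 0 ∧ q = 0 := by constructor <;> nlinarith
    obtain ⟨rfl, rfl⟩ : p' = 0 ∧ q' = 0 := by constructor <;> nlinarith
    exact ⟨0, by simp⟩
  have hnorm : ∀ a b : ℝ,
      ((a : ℂ) - b * I) / 2 * ((a + b * I) / 2) = ((a ^ 2 + b ^ 2) / 4 : ℝ) := by
    intro a b; push_cast; linear_combination (-(b : ℂ) ^ 2 / 4) * I_sq
  have hμ : ∀ a b : ℝ, a ^ 2 + b ^ 2 ≠ 0 → ((a : ℂ) - b * I) / 2 ≠ 0 := fun a b hab =>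
    left_ne_zero_of_mul (by rw [hnorm]; exact_mod_cast div_ne_zero hab four_ne_zero)
  obtain ⟨C, hC⟩ :=
    (isPrimitiveRoot_exp n hn.ne').exists_prod_add_mul_pow_add_mul_inv_pow_eq_add_const hn
      (hμ p q h0) (hμ p' q' (h ▸ h0)) (by rw [hnorm, hnorm, h])
  refine ⟨C.re, fun t => ?_⟩
  simpa only [← ofReal_add_trigLin, ← Complex.ofReal_prod, Complex.add_re, Complex.ofReal_re]
    using congrArg Complex.re (hC t)

theorem hasDerivAt_prod_add {𝕜 ι : Type*} [NontriviallyNormedField 𝕜] [DecidableEq ι]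
    (s : Finset ι) (c : ι → 𝕜) (a : 𝕜) :
    HasDerivAt (fun t => ∏ k ∈ s, (t + c k)) (∑ j ∈ s, ∏ k ∈ s.erase j, (a + c k)) a := by
  simpa using HasDerivAt.fun_finsetProd fun k (_ : k ∈ s) => (hasDerivAt_id a).add_const (c k)

theorem sum_prod_erase_add_trigLin_eq (n : ℕ) (a : ℝ) {p q p' q' : ℝ}
    (h : p ^ 2 + q ^ 2 = p' ^ 2 + q' ^ 2) :
    ∑ j ∈ range n, ∏ k ∈ (range n).erase j, (a + trigLin n p q k)
      = ∑ j ∈ range n, ∏ k ∈ (range n).erase j, (a + trigLin n p' q' k) := by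
  obtain ⟨C, hC⟩ := exists_prod_add_trigLin_eq_add_const n h
  have hderiv := hasDerivAt_prod_add (range n) (trigLin n p q) a
  rw [funext hC] at hderiv
  exact hderiv.unique ((hasDerivAt_prod_add (range n) (trigLin n p' q') a).add_const C)

theorem one_add_mul_rhoJ (n k : ℕ) (c : ℝ) (x y : ℝ × ℝ) :
    1 + c * rhoJ n k x y
      = 1 + c * dot2 x y + trigLin n (-(c * dot2 x y)) (c * (x.1 * y.2 - x.2 * y.1)) k := by
  simp only [rhoJ, dot2, rotMap, trigLin, Prod.fst_sub, Prod.snd_sub, Int.cast_natCast]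
  ring

theorem one_add_mul_sigmaJ (n k : ℕ) (c : ℝ) (x y : ℝ × ℝ) :
    1 + c * sigmaJ n k x y
      = 1 + c * dot2 x y
        + trigLin n (c * (x.1 * y.1 - x.2 * y.2)) (-(c * (x.1 * y.2 + x.2 * y.1))) k := by
  simp only [sigmaJ, dot2, reflMap, trigLin, Prod.fst_sub, Prod.snd_sub, Int.cast_natCast]
  ring

theorem sum_prod_rot_eq_sum_prod_refl_general (n : ℕ) (c : ℝ) (x y : ℝ × ℝ) :
    ∑ j ∈ Finset.range n, ∏ k ∈ (Finset.range n).erase j, (1 + c * rhoJ n k x y) =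
      ∑ j ∈ Finset.range n, ∏ k ∈ (Finset.range n).erase j, (1 + c * sigmaJ n k x y) := by
  simp only [one_add_mul_rhoJ, one_add_mul_sigmaJ]
  exact sum_prod_erase_add_trigLin_eq n _ (by simp only [dot2]; ring)

/-- `D_R 𝔇_R = D_S 𝔇_S`, in the polynomial form
`∑_j ∏_{k≠j} (1 + cρ_k) = ∑_j ∏_{k≠j} (1 + cσ_k)` for every `c ∈ ℝ` and `x, y ∈ ℝ²`. -/
theorem sum_prod_rot_eq_sum_prod_refl (n : ℕ) (hn : 3 ≤ n) (c : ℝ) (x y : ℝ × ℝ) :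
    ∑ j ∈ Finset.range n, ∏ k ∈ (Finset.range n).erase j, (1 + c * rhoJ n k x y) =
      ∑ j ∈ Finset.range n, ∏ k ∈ (Finset.range n).erase j, (1 + c * sigmaJ n k x y) :=
  sum_prod_rot_eq_sum_prod_refl_general n c x y
end
end

section
/- If 0 < c < 2/(2κ+1), then the function M(x) = max{f(x), g(x)} is nonincreasing on [0, ∞); in particular f(x) ≤ 1 and g(x) ≤ 1 for all x ≥ 0. -/
/-!
The system is cooperative: the coupling coefficients `κ / (x (1 + cxy))` and `κ (1 + cxy) / x`
are positive. Hence `f` and `g` stay positive: on `[x₀/2, x₀]` all coefficients are bounded by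
some `C`, so `e^{Cx} f` and `e^{Cx} g` are nondecreasing as long as both are positive, which rules
out a first zero `x₀`. When `c < 2 / (2κ + 1)` the remaining coefficient of `g` is negative, so
at every `x > 0` whichever of `f`, `g` is the larger has nonpositive derivative. The upper right
Dini derivative of `max f g` is then nonpositive, and `max f g` is nonincreasing.
-/

open Real Set Filter Topology

theorem pos_right_of_neg_mul_le_deriv {u u' : ℝ → ℝ} {C a b : ℝ} (hab : a ≤ b)
    (hu : ContinuousOn u (Icc a b)) (hd : ∀ x ∈ Ioo a b, HasDerivAt u (u' x) x)
    (hC : ∀ x ∈ Ioo a b, -C * u x ≤ u' x) (ha : 0 < u a) : 0 < u b := by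
  have hmono : MonotoneOn (fun x => exp (C * x) * u x) (Icc a b) := by
    refine monotoneOn_of_hasDerivWithinAt_nonneg (convex_Icc a b) (by fun_prop)
      (f' := fun x => exp (C * x) * (C * u x + u' x)) (fun x hx => ?_) (fun x hx => ?_) <;>
      rw [interior_Icc] at hx
    · have h : HasDerivAt (fun t => exp (C * t) * u t)
          (exp (C * x) * (C * 1) * u x + exp (C * x) * u' x) x :=
        ((hasDerivAt_id' x).const_mul C).exp.mul (hd x hx)
      exact (h.congr_deriv (by ring)).hasDerivWithinAt
    · exact mul_nonneg (exp_pos _).le (by linarith [hC x hx])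
  have := hmono (left_mem_Icc.2 hab) (right_mem_Icc.2 hab) hab
  exact pos_of_mul_pos_right (lt_of_lt_of_le (by positivity) this) (exp_pos _).le

theorem forall_pos_of_pos_of_forall_Ico_pos {u : ℝ → ℝ} (hu : ContinuousOn u (Ici 0))
    (h0 : 0 < u 0) (hstep : ∀ x₀ > 0, (∀ x ∈ Ico 0 x₀, 0 < u x) → 0 < u x₀) :
    ∀ x ≥ 0, 0 < u x := by
  by_contra! hneg
  set S := Ici 0 ∩ u ⁻¹' Iic 0
  have hS : S.Nonempty := hneg
  have hbdd : BddBelow S := ⟨0, fun x hx => hx.1⟩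
  have hmem : sInf S ∈ S :=
    (hu.preimage_isClosed_of_isClosed isClosed_Ici isClosed_Iic).csInf_mem hS hbdd
  have hpos : 0 < sInf S := hmem.1.lt_of_ne fun h => not_le.2 h0 (h ▸ hmem.2)
  refine (not_lt.2 hmem.2) (hstep _ hpos fun x hx => ?_)
  by_contra! hx'
  exact not_le.2 hx.2 (csInf_le hbdd ⟨hx.1, hx'⟩)

theorem eventually_slope_max_lt {f g : ℝ → ℝ} {f' g' x r : ℝ} (hf : HasDerivAt f f' x)
    (hg : HasDerivAt g g' x) (hfr : g x ≤ f x → f' < r) (hgr : f x ≤ g x → g' < r) :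
    ∀ᶠ z in 𝓝[>] x, slope (fun t => max (f t) (g t)) x z < r := by
  have slope_lt {u : ℝ → ℝ} {u' : ℝ} (hu : HasDerivAt u u' x) (hr : u' < r) :
      ∀ᶠ z in 𝓝[>] x, slope u x z < r :=
    ((hasDerivWithinAt_iff_tendsto_slope' (lt_irrefl x)).1
      hu.hasDerivWithinAt).eventually_lt_const hr
  have slope_max_eq {u v : ℝ → ℝ} {z : ℝ} (hx : v x ≤ u x) (hz : v z ≤ u z) :
      slope (fun t => max (u t) (v t)) x z = slope u x z := by
    simp only [slope_def_field, max_eq_left hx, max_eq_left hz]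
  have hmax_comm : (fun t => max (f t) (g t)) = fun t => max (g t) (f t) := by
    simp only [max_comm]
  rcases lt_trichotomy (f x) (g x) with h | h | h
  · filter_upwards [slope_lt hg (hgr h.le),
      (hf.continuousAt.eventually_lt hg.continuousAt h).filter_mono nhdsWithin_le_nhds]
      with z hz hfz
    rwa [hmax_comm, slope_max_eq h.le hfz.le]
  · filter_upwards [slope_lt hf (hfr h.ge), slope_lt hg (hgr h.le)] with z hzf hzg
    rcases le_total (f z) (g z) with hz | hz
    · rwa [hmax_comm, slope_max_eq h.le hz]
    · rwa [slope_max_eq h.ge hz]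
  · filter_upwards [slope_lt hf (hfr h.le),
      (hg.continuousAt.eventually_lt hf.continuousAt h).filter_mono nhdsWithin_le_nhds]
      with z hz hgz
    rwa [slope_max_eq h.le hgz.le]

theorem antitoneOn_Ici_of_eventually_slope_lt {M : ℝ → ℝ} {a : ℝ} (hM : ContinuousOn M (Ici a))
    (hslope : ∀ x > a, ∀ r > 0, ∀ᶠ z in 𝓝[>] x, slope M x z < r) : AntitoneOn M (Ici a) := by
  have hIoi : ∀ u > a, ∀ v ≥ u, M v ≤ M u := fun u hu v hv =>
    image_le_of_liminf_slope_right_le_deriv_boundary (B := fun _ => M u)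
      (hM.mono fun t ht => hu.le.trans ht.1) le_rfl continuousOn_const
      (fun x _ => hasDerivWithinAt_const x _ _)
      (fun x hx r hr => (hslope x (hu.trans_le hx.1) r hr).frequently) (right_mem_Icc.2 hv)
  intro u (hu : a ≤ u) v (hv : a ≤ v) huv
  rcases hu.lt_or_eq with hu | rfl
  · exact hIoi u hu v huv
  rcases hv.lt_or_eq with hv | rfl
  · exact ContinuousWithinAt.closure_le (s := Ioc a v) (by simp [closure_Ioc hv.ne, hv.le])
      continuousWithinAt_const ((hM a self_mem_Ici).mono fun t ht => le_of_lt ht.1)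
      fun t ht => hIoi t ht.1 v ht.2
  · exact le_rfl

section CooperativeSystem

variable {f g a b e : ℝ → ℝ}

theorem pos_of_cooperative_system (hfc : ContinuousOn f (Ici 0)) (hgc : ContinuousOn g (Ici 0))
    (hf : ∀ x > 0, HasDerivAt f (a x * (g x - f x)) x)
    (hg : ∀ x > 0, HasDerivAt g (b x * (f x - g x) + e x * g x) x)
    (ha : ∀ x > 0, 0 ≤ a x) (hb : ∀ x > 0, 0 ≤ b x) (hac : ContinuousOn a (Ioi 0))
    (hbc : ContinuousOn b (Ioi 0)) (hec : ContinuousOn e (Ioi 0)) (hf0 : 0 < f 0)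
    (hg0 : 0 < g 0) : ∀ x ≥ 0, 0 < f x ∧ 0 < g x := by
  suffices ∀ x ≥ 0, 0 < min (f x) (g x) by simpa only [lt_min_iff] using this
  refine forall_pos_of_pos_of_forall_Ico_pos (hfc.inf hgc) (lt_min hf0 hg0) fun x₀ hx₀ hpos => ?_
  have hsub : Icc (x₀ / 2) x₀ ⊆ Ioi 0 := fun x hx => (half_pos hx₀).trans_le hx.1
  obtain ⟨Ka, hKa⟩ := isCompact_Icc.exists_bound_of_continuousOn (hac.mono hsub)
  obtain ⟨Kb, hKb⟩ := isCompact_Icc.exists_bound_of_continuousOn (hbc.mono hsub)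
  obtain ⟨Ke, hKe⟩ := isCompact_Icc.exists_bound_of_continuousOn (hec.mono hsub)
  have hbound : ∀ x ∈ Ioo (x₀ / 2) x₀, -(Ka + Kb + Ke) * f x ≤ a x * (g x - f x) ∧
      -(Ka + Kb + Ke) * g x ≤ b x * (f x - g x) + e x * g x := by
    intro x hx
    have hxI := Ioo_subset_Icc_self hx
    have hx0 : 0 < x := hsub hxI
    obtain ⟨hfx, hgx⟩ := lt_min_iff.1 (hpos x ⟨hx0.le, hx.2⟩)
    have hax : a x ≤ Ka := (le_abs_self _).trans (hKa x hxI)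
    have hbx : b x ≤ Kb := (le_abs_self _).trans (hKb x hxI)
    have hex : -e x ≤ Ke := (neg_le_abs _).trans (hKe x hxI)
    have hKe₀ : 0 ≤ Ke := (abs_nonneg _).trans (hKe x hxI)
    have hag := mul_nonneg (ha x hx0) hgx.le
    have hbf := mul_nonneg (hb x hx0) hfx.le
    constructor <;> nlinarith [ha x hx0, hb x hx0]
  obtain ⟨hf₁, hg₁⟩ := lt_min_iff.1 (hpos (x₀ / 2) ⟨(half_pos hx₀).le, half_lt_self hx₀⟩)
  have hle : x₀ / 2 ≤ x₀ := (half_lt_self hx₀).le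
  exact lt_min
    (pos_right_of_neg_mul_le_deriv hle (hfc.mono (hsub.trans Ioi_subset_Ici_self))
      (fun x hx => hf x (hsub (Ioo_subset_Icc_self hx))) (fun x hx => (hbound x hx).1) hf₁)
    (pos_right_of_neg_mul_le_deriv hle (hgc.mono (hsub.trans Ioi_subset_Ici_self))
      (fun x hx => hg x (hsub (Ioo_subset_Icc_self hx))) (fun x hx => (hbound x hx).2) hg₁)

theorem antitoneOn_max_of_cooperative_system (hfc : ContinuousOn f (Ici 0))
    (hgc : ContinuousOn g (Ici 0)) (hf : ∀ x > 0, HasDerivAt f (a x * (g x - f x)) x)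
    (hg : ∀ x > 0, HasDerivAt g (b x * (f x - g x) + e x * g x) x)
    (ha : ∀ x > 0, 0 ≤ a x) (hb : ∀ x > 0, 0 ≤ b x) (he : ∀ x > 0, e x ≤ 0)
    (hg_nonneg : ∀ x > 0, 0 ≤ g x) : AntitoneOn (fun x => max (f x) (g x)) (Ici 0) :=
  antitoneOn_Ici_of_eventually_slope_lt (hfc.sup hgc) fun x hx r hr =>
    eventually_slope_max_lt (hf x hx) (hg x hx)
      (fun h => by nlinarith [mul_nonneg (ha x hx) (sub_nonneg.2 h)])
      (fun h => by
        nlinarith [mul_nonneg (hb x hx) (sub_nonneg.2 h),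
          mul_nonneg (neg_nonneg.2 (he x hx)) (hg_nonneg x hx)])

end CooperativeSystem

theorem barrier_coeff_nonpos {κ y c x : ℝ} (hκ : 0 < κ) (hy : 0 < y) (hc : 0 < c)
    (hc' : c < 2 / (2 * κ + 1)) (hx : 0 < x) :
    y * ((2 * κ + 1) * c + (κ * c - 2) * c * x * y - 2) / (1 + c * x * y) ≤ 0 := by
  have h₁ : c * (2 * κ + 1) < 2 := (lt_div_iff₀ (by positivity)).1 hc'
  have h₂ : κ * c < 2 := by nlinarith
  have h₃ : (2 * κ + 1) * c + (κ * c - 2) * c * x * y - 2 ≤ 0 := by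
    nlinarith [mul_pos (mul_pos hc hx) hy]
  exact div_nonpos_of_nonpos_of_nonneg (mul_nonpos_of_nonneg_of_nonpos hy.le h₃) (by positivity)

/-- One-dimensional case, upper bound: if `0 < c < 2/(2κ+1)`, then
`M(x) = max{f(x), g(x)}` is nonincreasing on `[0,∞)`; in particular `f ≤ 1` and
`g ≤ 1` on `[0,∞)`. Here `f, g` satisfy the differential system obtained from the
one-dimensional Dunkl kernel after the barrier transformation. -/
theorem oneDim_upper (κ y c : ℝ) (hκ : 0 < κ) (hy : 0 < y) (hc : 0 < c)
    (f g : ℝ → ℝ)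
    (hfc : ContinuousOn f (Set.Ici 0)) (hgc : ContinuousOn g (Set.Ici 0))
    (hf0 : f 0 = 1) (hg0 : g 0 = 1)
    (hf : ∀ x > (0 : ℝ),
      HasDerivAt f (κ / (x * (1 + c * x * y)) * (g x - f x)) x)
    (hg : ∀ x > (0 : ℝ),
      HasDerivAt g (κ * (1 + c * x * y) / x * (f x - g x)
        + y * ((2 * κ + 1) * c + (κ * c - 2) * c * x * y - 2) / (1 + c * x * y) * g x) x)
    (hc' : c < 2 / (2 * κ + 1)) :
    AntitoneOn (fun x => max (f x) (g x)) (Set.Ici 0) ∧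
      ∀ x ≥ (0 : ℝ), f x ≤ 1 ∧ g x ≤ 1 := by
  have hpos := pos_of_cooperative_system hfc hgc hf hg (fun x hx => by positivity)
    (fun x hx => by positivity)
    (by fun_prop (disch := exact fun x (hx : 0 < x) => by positivity))
    (by fun_prop (disch := exact fun x (hx : 0 < x) => by positivity))
    (by fun_prop (disch := exact fun x (hx : 0 < x) => by positivity))
    (hf0 ▸ one_pos) (hg0 ▸ one_pos)
  have hanti : AntitoneOn (fun x => max (f x) (g x)) (Ici 0) :=
    antitoneOn_max_of_cooperative_system hfc hgc hf hg (fun x hx => by positivity)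
      (fun x hx => by positivity) (fun x hx => barrier_coeff_nonpos hκ hy hc hc' hx)
      (fun x hx => (hpos x hx.le).2.le)
  refine ⟨hanti, fun x hx => ?_⟩
  have h := hanti self_mem_Ici hx hx
  simp only [hf0, hg0, max_self, max_le_iff] at h
  exact h
end

section
/- If c > 2/κ, then the function m(x) = min{f(x), g(x)} is nondecreasing on [0, ∞); in particular f(x) ≥ 1 and g(x) ≥ 1 for all x ≥ 0. -/
/-!
At a point `x > 0` the lower right Dini derivative of `m = min f g` is at least the derivative of
whichever of `f`, `g` is smaller (of both, where they agree). There `f' ≥ 0` because `g - f ≥ 0`,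
and `g' ≥ 0` because `f - g ≥ 0` and, for `κ c ≥ 2`, the coefficient
`(2κ + 1) c + (κ c - 2) c x y - 2` of `g` is nonnegative, provided `g x ≥ 0`. A barrier argument
turns this into `m a ≤ m b` for `0 < a ≤ b` whenever `m a > 0`. Since `m → 1` at `0⁺`, this gives
`m ≥ 1` on `[0, ∞)`, so the positivity proviso always holds and `m` is monotone.
-/

open Set Filter Topology

theorem le_image_of_frequently_lt_slope_on_boundary {m : ℝ → ℝ} {a b ε : ℝ}
    (hm : ContinuousOn m (Icc a b))
    (hslope : ∀ x ∈ Ico a b, m x = m a - ε * (x - a) → ∃ᶠ z in 𝓝[>] x, -ε < slope m x z) :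
    ∀ x ∈ Icc a b, m a - ε * (x - a) ≤ m x := by
  have hB : ContinuousOn (fun x => m x - (m a - ε * (x - a))) (Icc a b) := by fun_prop
  have hclosed : IsClosed ({x | m a - ε * (x - a) ≤ m x} ∩ Icc a b) := by
    simpa only [inter_comm, preimage, mem_Ici, sub_nonneg] using
      hB.preimage_isClosed_of_isClosed isClosed_Icc (isClosed_Ici (a := 0))
  refine hclosed.Icc_subset_of_forall_exists_gt (by simp) ?_
  rintro x ⟨hx : m a - ε * (x - a) ≤ m x, hxab⟩ y hy
  rcases hx.lt_or_eq with hlt | heq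
  · have hnear : ∀ᶠ z in 𝓝[>] x, m a - ε * (z - a) < m z := by
      have := hB x (Ico_subset_Icc_self hxab) (Ioi_mem_nhds (sub_pos.2 hlt))
      filter_upwards [nhdsWithin_le_of_mem (Icc_mem_nhdsGT_of_mem hxab) this] with z hz
      exact sub_pos.1 hz
    exact (hnear.and (Ioc_mem_nhdsGT hy)).exists.imp fun z hz => ⟨hz.1.le, hz.2⟩
  · obtain ⟨z, hz, hzI⟩ := ((hslope x hxab heq.symm).and_eventually (Ioc_mem_nhdsGT hy)).exists
    refine ⟨z, ?_, hzI⟩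
    rw [slope_def_field, lt_div_iff₀ (sub_pos.2 hzI.1)] at hz
    change m a - ε * (z - a) ≤ m z
    linarith

theorem le_of_liminf_slope_right_nonneg {m : ℝ → ℝ} {a b l : ℝ} (hab : a ≤ b)
    (hm : ContinuousOn m (Icc a b)) (hl : l < m a)
    (hslope : ∀ x ∈ Ico a b, l < m x → m x ≤ m a → ∀ r < 0, ∃ᶠ z in 𝓝[>] x, r < slope m x z) :
    m a ≤ m b := by
  refine le_of_forall_pos_le_add fun δ hδ => ?_
  have hη : 0 < min δ (m a - l) := lt_min hδ (sub_pos.2 hl)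
  set ε := min δ (m a - l) / (b - a + 1)
  have hε : 0 < ε := div_pos hη (by linarith)
  have hεb : ε * (b - a) < min δ (m a - l) := by
    rw [div_mul_eq_mul_div, div_lt_iff₀ (by linarith)]
    nlinarith
  have hbarrier := le_image_of_frequently_lt_slope_on_boundary (ε := ε) hm
    (fun x hx hxB => hslope x hx ?_ ?_ (-ε) (neg_lt_zero.2 hε)) b (right_mem_Icc.2 hab)
  · linarith [min_le_left δ (m a - l)]
  · have : ε * (x - a) ≤ ε * (b - a) := by gcongr; exact hx.2.le
    linarith [min_le_right δ (m a - l)]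
  · have : 0 ≤ ε * (x - a) := mul_nonneg hε.le (sub_nonneg.2 hx.1)
    linarith

theorem HasDerivAt.eventually_lt_slope_min {f g : ℝ → ℝ} {f' g' x r : ℝ}
    (hf : HasDerivAt f f' x) (hg : HasDerivAt g g' x)
    (hf' : f x ≤ g x → 0 ≤ f') (hg' : g x ≤ f x → 0 ≤ g') (hr : r < 0) :
    ∀ᶠ z in 𝓝[>] x, r < slope (fun t => min (f t) (g t)) x z := by
  wlog hfg : f x ≤ g x generalizing f g f' g'
  · simpa only [min_comm] using this hg hf hg' hf' (le_of_not_ge hfg)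
  have hsf : Tendsto (slope f x) (𝓝[>] x) (𝓝 f') := hf.tendsto_slope.mono_left (nhdsGT_le_nhdsNE x)
  have hsg : Tendsto (slope g x) (𝓝[>] x) (𝓝 g') := hg.tendsto_slope.mono_left (nhdsGT_le_nhdsNE x)
  rcases hfg.lt_or_eq with hlt | heq
  · have hmin : ∀ᶠ z in 𝓝[>] x, f z < g z :=
      nhdsWithin_le_nhds (hf.continuousAt.eventually_lt hg.continuousAt hlt)
    filter_upwards [hmin, hsf.eventually_const_lt (hr.trans_le (hf' hlt.le))] with z hz hfz
    simpa only [slope_def_field, min_eq_left hz.le, min_eq_left hlt.le] using hfz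
  · have hlim : Tendsto (fun z => min (slope f x z) (slope g x z)) (𝓝[>] x) (𝓝 (min f' g')) :=
      hsf.min hsg
    filter_upwards [hlim.eventually_const_lt (lt_min (hr.trans_le (hf' heq.le))
      (hr.trans_le (hg' heq.ge))), self_mem_nhdsWithin] with z hz (hxz : x < z)
    refine hz.trans_le ?_
    -- `f x = g x`, so `min (f z) (g z) - min (f x) (g x) = min (f z - f x) (g z - g x)`
    rw [slope_def_field, slope_def_field, slope_def_field,
      min_div_div_right (sub_nonneg.2 (le_of_lt hxz))]
    gcongr
    rw [heq, min_self, min_sub_sub_right]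

theorem dunkl_f_rhs_nonneg {κ c y x u v : ℝ} (hκ : 0 ≤ κ) (hc : 0 ≤ c) (hy : 0 ≤ y)
    (hx : 0 ≤ x) (huv : u ≤ v) : 0 ≤ κ / (x * (1 + c * x * y)) * (v - u) :=
  mul_nonneg (by positivity) (sub_nonneg.2 huv)

theorem dunkl_g_rhs_nonneg {κ c y x u v : ℝ} (hκ : 0 ≤ κ) (hc : 0 ≤ c) (hy : 0 ≤ y)
    (hκc : 2 ≤ κ * c) (hx : 0 ≤ x) (hv : 0 ≤ v) (hvu : v ≤ u) :
    0 ≤ κ * (1 + c * x * y) / x * (u - v)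
      + y * ((2 * κ + 1) * c + (κ * c - 2) * c * x * y - 2) / (1 + c * x * y) * v := by
  have hcoeff : 0 ≤ (2 * κ + 1) * c + (κ * c - 2) * c * x * y - 2 := by
    have : 0 ≤ (κ * c - 2) * (c * x * y) := mul_nonneg (by linarith) (by positivity)
    nlinarith
  have : 0 ≤ κ * (1 + c * x * y) / x * (u - v) := mul_nonneg (by positivity) (sub_nonneg.2 hvu)
  have : 0 ≤ y * ((2 * κ + 1) * c + (κ * c - 2) * c * x * y - 2) / (1 + c * x * y) * v := by
    positivity
  linarith

theorem dunkl_min_le_min {κ y c a b : ℝ} (hκ : 0 ≤ κ) (hy : 0 ≤ y) (hc : 0 ≤ c)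
    (hκc : 2 ≤ κ * c) {f g : ℝ → ℝ}
    (hfc : ContinuousOn f (Icc a b)) (hgc : ContinuousOn g (Icc a b))
    (hf : ∀ x > (0 : ℝ),
      HasDerivAt f (κ / (x * (1 + c * x * y)) * (g x - f x)) x)
    (hg : ∀ x > (0 : ℝ),
      HasDerivAt g (κ * (1 + c * x * y) / x * (f x - g x)
        + y * ((2 * κ + 1) * c + (κ * c - 2) * c * x * y - 2) / (1 + c * x * y) * g x) x)
    (ha : 0 < a) (hab : a ≤ b) (hma : 0 < min (f a) (g a)) :
    min (f a) (g a) ≤ min (f b) (g b) := by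
  refine le_of_liminf_slope_right_nonneg (m := fun x => min (f x) (g x)) hab (hfc.inf hgc) hma
    fun x hx hmx _ r hr => Eventually.frequently ?_
  have hx0 : 0 < x := ha.trans_le hx.1
  exact (hf x hx0).eventually_lt_slope_min (hg x hx0)
    (dunkl_f_rhs_nonneg hκ hc hy hx0.le)
    (dunkl_g_rhs_nonneg hκ hc hy hκc hx0.le (hmx.trans_le (min_le_right _ _)).le) hr

/-- One-dimensional case, lower bound: if `c > 2/κ`, then
`m(x) = min{f(x), g(x)}` is nondecreasing on `[0,∞)`; in particular `f ≥ 1` and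
`g ≥ 1` on `[0,∞)`. Here `f, g` satisfy the differential system obtained from the
one-dimensional Dunkl kernel after the barrier transformation. -/
theorem oneDim_lower (κ y c : ℝ) (hκ : 0 < κ) (hy : 0 < y) (hc : 0 < c)
    (f g : ℝ → ℝ)
    (hfc : ContinuousOn f (Set.Ici 0)) (hgc : ContinuousOn g (Set.Ici 0))
    (hf0 : f 0 = 1) (hg0 : g 0 = 1)
    (hf : ∀ x > (0 : ℝ),
      HasDerivAt f (κ / (x * (1 + c * x * y)) * (g x - f x)) x)
    (hg : ∀ x > (0 : ℝ),
      HasDerivAt g (κ * (1 + c * x * y) / x * (f x - g x)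
        + y * ((2 * κ + 1) * c + (κ * c - 2) * c * x * y - 2) / (1 + c * x * y) * g x) x)
    (hc' : 2 / κ < c) :
    MonotoneOn (fun x => min (f x) (g x)) (Set.Ici 0) ∧
      ∀ x ≥ (0 : ℝ), 1 ≤ f x ∧ 1 ≤ g x := by
  set m : ℝ → ℝ := fun x => min (f x) (g x)
  have hκc : 2 ≤ κ * c := by rw [mul_comm]; exact ((div_lt_iff₀ hκ).1 hc').le
  have hm0 : m 0 = 1 := by simp [m, hf0, hg0]
  have hmono : ∀ a b, 0 < a → a ≤ b → 0 < m a → m a ≤ m b := fun a b ha hab hma =>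
    dunkl_min_le_min hκ.le hy.le hc.le hκc (hfc.mono fun x hx => ha.le.trans hx.1)
      (hgc.mono fun x hx => ha.le.trans hx.1) hf hg ha hab hma
  have hlim : Tendsto m (𝓝[>] 0) (𝓝 1) :=
    hm0 ▸ ((hfc.inf hgc) 0 self_mem_Ici).tendsto.mono_left (nhdsWithin_mono _ Ioi_subset_Ici_self)
  have hone : ∀ b ≥ (0 : ℝ), 1 ≤ m b := by
    intro b hb
    rcases hb.eq_or_lt with rfl | hb
    · exact hm0.ge
    refine le_of_tendsto hlim ?_
    filter_upwards [hlim.eventually (lt_mem_nhds one_pos), Ioc_mem_nhdsGT hb] with t ht htb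
    exact hmono t b htb.1 htb.2 ht
  refine ⟨fun a ha b _ hab => ?_, fun x hx => ⟨(hone x hx).trans (min_le_left _ _),
    (hone x hx).trans (min_le_right _ _)⟩⟩
  rcases (mem_Ici.1 ha).eq_or_lt with rfl | ha
  · exact hm0 ▸ hone b (ha.trans hab)
  · exact hmono a b ha hab (one_pos.trans_le (hone a ha.le))
end
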